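/- Fix an integer n ≥ 2, parameters q_1, …, q_n > 0, parameters α_1 ≥ α_2 ≥ … ≥ α_n > 0, and a real number Λ. Then the transformed system has at least one internal fixed point if and only if both of the following hold: (i) Λ = ((Σ_{l=1}^{n} 1/q_l) − 1) / (Σ_{l=1}^{n} 1/(α_l q_l)), and (ii) α_n · Σ_{l=1}^{n} 1/(α_l q_l) > (Σ_{l=1}^{n} 1/q_l) − 1. -/
import Mathlib


/-- The transformed system `ẇᵢ = αᵢ wᵢ (1 - Λ/αᵢ - xᵢ)`, `ẋᵢ = wᵢ(qᵢ - xᵢ (∑ wₗ)/wᵢ)`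
has an internal fixed point (all coordinates positive) iff
`Λ = ((∑ 1/qₗ) - 1)/(∑ 1/(αₗ qₗ))` and `αₙ ∑ 1/(αₗ qₗ) > (∑ 1/qₗ) - 1`. -/
theorem stmt_1 (n : ℕ) (hn : 2 ≤ n) (q α : Fin n → ℝ)
    (hq : ∀ i, 0 < q i) (hα : ∀ i, 0 < α i)
    (hmono : ∀ i j : Fin n, i ≤ j → α j ≤ α i) (Λ : ℝ) :
    (∃ w x : Fin n → ℝ, (∀ i, 0 < w i) ∧ (∀ i, 0 < x i) ∧
      (∀ i, α i * w i * (1 - Λ / α i - x i) = 0) ∧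
      (∀ i, w i * q i - x i * ∑ l, w l = 0)) ↔
    (Λ = ((∑ l, 1 / q l) - 1) / ∑ l, 1 / (α l * q l) ∧
      α ⟨n - 1, by omega⟩ * ∑ l, 1 / (α l * q l) > (∑ l, 1 / q l) - 1) := by
  have hnem : (Finset.univ : Finset (Fin n)).Nonempty := ⟨⟨0, by omega⟩, Finset.mem_univ _⟩
  set A := ∑ l, 1 / (α l * q l) with hAdef
  set B := ∑ l, 1 / q l with hBdef
  have hApos : 0 < A := Finset.sum_pos (fun l _ => div_pos one_pos (mul_pos (hα l) (hq l))) hnem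
  set m : Fin n := ⟨n - 1, by omega⟩ with hm
  have hlast : ∀ i : Fin n, α m ≤ α i := fun i => hmono i m (by
    simp only [Fin.le_def, hm]; omega)
  have hsumx : ∀ y : Fin n → ℝ, (∀ i, y i = 1 - Λ / α i) →
      ∑ l, y l / q l = B - Λ * A := by
    intro y hy
    have : ∀ l : Fin n, y l / q l = 1 / q l - Λ * (1 / (α l * q l)) := by
      intro l
      rw [hy l]
      have h1 := (hα l).ne'
      have h2 := (hq l).ne'
      field_simp
    rw [Finset.sum_congr rfl (fun l _ => this l), Finset.sum_sub_distrib,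
      ← Finset.mul_sum]
  constructor
  · rintro ⟨w, x, hw, hx, h1, h2⟩
    have hxval : ∀ i, x i = 1 - Λ / α i := by
      intro i
      have h := h1 i
      have hαw : α i * w i ≠ 0 := (mul_pos (hα i) (hw i)).ne'
      rcases mul_eq_zero.mp h with h' | h'
      · exact absurd h' hαw
      · linarith
    set S := ∑ l, w l with hSdef
    have hSpos : 0 < S := Finset.sum_pos (fun l _ => hw l) hnem
    have hsum1 : ∑ l, x l / q l = 1 := by
      have key : S = S * ∑ l, x l / q l := by
        rw [Finset.mul_sum]
        rw [hSdef]
        apply Finset.sum_congr rfl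
        intro l _
        rw [mul_div_assoc', eq_div_iff (hq l).ne']
        linarith [h2 l]
      have : S * (∑ l, x l / q l - 1) = 0 := by linarith [key]
      rcases mul_eq_zero.mp this with h' | h'
      · exact absurd h' hSpos.ne'
      -- marker
      · linarith
    have hBA : B - Λ * A = 1 := by rw [← hsumx x hxval]; exact hsum1
    have hΛ : Λ = (B - 1) / A := by
      rw [eq_div_iff hApos.ne']; linarith
    refine ⟨hΛ, ?_⟩
    have hxm : 0 < x m := hx m
    rw [hxval m] at hxm
    have hΛlt : Λ < α m := by
      have h' : Λ / α m < 1 := by linarith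
      exact (div_lt_one (hα m)).mp h'
    have : Λ * A < α m * A := by nlinarith
    linarith
  · rintro ⟨hΛ, hgt⟩
    have hΛA : Λ * A = B - 1 := by
      rw [hΛ, div_mul_cancel₀ _ hApos.ne']
    have hΛlt : ∀ i, Λ < α i := by
      intro i
      have h1 : Λ < α m := by
        rw [hΛ, div_lt_iff₀ hApos]
        nlinarith
      exact lt_of_lt_of_le h1 (hlast i)
    set x : Fin n → ℝ := fun i => 1 - Λ / α i with hxdef
    have hxpos : ∀ i, 0 < x i := by
      intro i
      have : Λ / α i < 1 := (div_lt_one (hα i)).mpr (hΛlt i)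
      simp only [hxdef]; linarith
    refine ⟨fun i => x i / q i, x, fun i => div_pos (hxpos i) (hq i), hxpos, ?_, ?_⟩
    · intro i; simp [hxdef]
    · intro i
      have hsum : ∑ l, x l / q l = 1 := by
        rw [hsumx x (fun i => rfl)]; linarith
      rw [hsum, mul_one, div_mul_cancel₀ _ (hq i).ne', sub_self]
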